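/- Theorem (the weak variant ALSO-X#-underline is better than the CVaR approximation). For every t ∈ ℝ the following holds: if there exist x ∈ F_t and β ≤ 0 with C(x, β) ≤ 0 (i.e., the CVaR approximation is feasible at objective level t), then for every minimizer (x*, β*) of C over F_t × ℝ, the point x* is feasible. -/

import Mathlib

/-!
A minimizer `(x*, β*)` has CVaR loss at most that of the given feasible CVaR point, hence
`ε β* + E[(g - β*)₊] ≤ 0` for `g = f x*`. This forces `β* ≤ 0`, and Markov's inequality for
`(g - β*)₊` at level `-β*` gives `P{g > 0} ≤ ε`; when `β* = 0` instead `E[g₊] = 0`, so `g ≤ 0`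
almost surely. The integrability of `g` needed throughout comes from the domination of each
`aᵢ(x)ᵀζ` by `maxᵢ |aᵢ(x)ᵀζ|`.
-/

open MeasureTheory

section

variable {α ι : Type*} [MeasurableSpace α] {μ : Measure α}

lemma Real.abs_iSup_le_sum_abs [Fintype ι] (u : ι → ℝ) : |⨆ i, u i| ≤ ∑ i, |u i| := by
  cases isEmpty_or_nonempty ι
  · simp
  have hle : ∀ j, |u j| ≤ ∑ i, |u i| := fun j =>
    Finset.single_le_sum (fun i _ => abs_nonneg (u i)) (Finset.mem_univ j)
  obtain ⟨j⟩ := ‹Nonempty ι›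
  rw [abs_le]
  constructor
  · exact (neg_le_neg (hle j)).trans ((neg_abs_le _).trans (le_ciSup (Finite.bddAbove_range u) j))
  · exact ciSup_le fun i => (le_abs_self _).trans (hle i)

lemma MeasureTheory.Integrable.iSup [Fintype ι] {u : ι → α → ℝ} (hu : ∀ i, Integrable (u i) μ) :
    Integrable (fun x => ⨆ i, u i x) μ :=
  (integrable_finsetSum Finset.univ fun i _ => (hu i).abs).mono'
    (AEMeasurable.iSup fun i => (hu i).aemeasurable).aestronglyMeasurable
    (ae_of_all _ fun x => by simpa using Real.abs_iSup_le_sum_abs (u · x))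

lemma MeasureTheory.Integrable.of_iSup_abs [Finite ι] {u : ι → α → ℝ}
    (hu : ∀ i, AEStronglyMeasurable (u i) μ) (h : Integrable (fun x => ⨆ i, |u i x|) μ) (i : ι) :
    Integrable (u i) μ :=
  h.mono' (hu i) (ae_of_all _ fun x => le_ciSup (Finite.bddAbove_range (|u · x|)) i)

noncomputable def cvarLoss (μ : Measure α) (ε : ℝ) (g : α → ℝ) (β : ℝ) : ℝ :=
  ε * β + ∫ x, max (g x - β) 0 ∂μ

variable {ε β : ℝ} {g : α → ℝ}

lemma nonpos_of_cvarLoss_nonpos (hε : 0 < ε) (h : cvarLoss μ ε g β ≤ 0) : β ≤ 0 := by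
  have hint : 0 ≤ ∫ x, max (g x - β) 0 ∂μ := integral_nonneg fun x => le_max_right _ _
  unfold cvarLoss at h
  nlinarith

lemma measureReal_pos_le_of_cvarLoss_nonpos [IsFiniteMeasure μ] (hg : Integrable g μ) (hε : 0 < ε)
    (h : cvarLoss μ ε g β ≤ 0) : μ.real {x | 0 < g x} ≤ ε := by
  have hint : Integrable (fun x => max (g x - β) 0) μ := (hg.sub (integrable_const β)).pos_part
  have hnonneg : 0 ≤ᵐ[μ] fun x => max (g x - β) 0 := ae_of_all _ fun x => le_max_right _ _
  unfold cvarLoss at h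
  rcases (nonpos_of_cvarLoss_nonpos hε h).lt_or_eq with hβ | rfl
  · -- Markov's inequality at level `-β`, since `g > 0` forces `(g - β)₊ > -β`
    have hsub : {x | 0 < g x} ⊆ {x | -β ≤ max (g x - β) 0} := fun x (hx : 0 < g x) =>
      show -β ≤ max (g x - β) 0 from le_max_of_le_left (by linarith)
    have hmarkov := mul_meas_ge_le_integral_of_nonneg hnonneg hint (-β)
    have hmono := measureReal_mono hsub (μ := μ)
    nlinarith
  · have hzero : ∫ x, max (g x - 0) 0 ∂μ = 0 :=
      le_antisymm (by linarith) (integral_nonneg fun x => le_max_right _ _)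
    have hae : ∀ᵐ x ∂μ, g x ≤ 0 := by
      filter_upwards [(integral_eq_zero_iff_of_nonneg_ae hnonneg hint).mp hzero] with x hx
      simpa using hx
    have hnull : μ {x | 0 < g x} = 0 := by simpa [ae_iff] using hae
    simp [measureReal_def, hnull, hε.le]

lemma one_sub_le_measureReal_nonpos_of_cvarLoss_nonpos [IsProbabilityMeasure μ]
    (hg : Integrable g μ) (hε : 0 < ε) (h : cvarLoss μ ε g β ≤ 0) :
    1 - ε ≤ μ.real {x | g x ≤ 0} := by
  have hcompl : {x | g x ≤ 0} = {x | 0 < g x}ᶜ := by ext; simp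
  rw [hcompl, probReal_compl_eq_one_sub₀ (nullMeasurableSet_lt aemeasurable_const hg.aemeasurable)]
  linarith [measureReal_pos_le_of_cvarLoss_nonpos hg hε h]

end

theorem weak_alsoxSharp_better_than_cvar_general
    (n m I : ℕ)
    (ε : ℝ) (hε : ε ∈ Set.Ioo (0 : ℝ) 1)
    (θ : ℝ)
    -- `N` is a norm on ℝᵐ (playing the role of the dual norm)
    (N : (Fin m → ℝ) → ℝ)
    -- affine maps `a i : ℝⁿ → ℝᵐ`, `b i : ℝⁿ → ℝ`
    (a : Fin I → ((Fin n → ℝ) →ᵃ[ℝ] (Fin m → ℝ)))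
    (b : Fin I → ((Fin n → ℝ) →ᵃ[ℝ] ℝ))
    -- reference distribution
    (P : Measure (Fin m → ℝ)) [IsProbabilityMeasure P]
    (hint : ∀ x : Fin n → ℝ,
      Integrable (fun ζ => ⨆ i : Fin I, |∑ k, a i x k * ζ k|) P)
    -- `f x ζ = max_i (θ N(aᵢ(x)) + aᵢ(x)ᵀζ - bᵢ(x))`
    (f : (Fin n → ℝ) → (Fin m → ℝ) → ℝ)
    (hf : ∀ x ζ, f x ζ = ⨆ i : Fin I, (θ * N (a i x) + ∑ k, a i x k * ζ k - b i x))
    -- feasibility for the distributionally robust chance constraint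
    (feasible : (Fin n → ℝ) → Prop)
    (hfeas : ∀ x, feasible x ↔ 1 - ε ≤ (P {ζ | f x ζ ≤ 0}).toReal)
    (F : ℝ → Set (Fin n → ℝ))
    -- CVaR loss (lower-level CVaR / ALSO-X#-underline objective)
    (C : (Fin n → ℝ) → ℝ → ℝ)
    (hC : ∀ x β, C x β = ε * β + ∫ ζ, max (f x ζ - β) 0 ∂P) :
    ∀ t : ℝ,
      (∃ x ∈ F t, ∃ β ≤ (0 : ℝ), C x β ≤ 0) →
      ∀ (xstar : Fin n → ℝ) (βstar : ℝ), (xstar, βstar) ∈ F t ×ˢ (Set.univ : Set ℝ) →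
        IsMinOn (fun q : (Fin n → ℝ) × ℝ => C q.1 q.2) (F t ×ˢ (Set.univ : Set ℝ)) (xstar, βstar) →
        feasible xstar := by
  rintro t ⟨x, hx, β, -, hCx⟩ xstar βstar - hmin
  have hlinear : ∀ i, Integrable (fun ζ => ∑ k, a i xstar k * ζ k) P :=
    (hint xstar).of_iSup_abs fun i =>
      (Finset.measurable_sum _ fun k _ => (measurable_pi_apply k).const_mul _).aestronglyMeasurable
  have hg : Integrable (f xstar) P := by
    rw [funext (hf xstar)]
    exact Integrable.iSup fun i => ((integrable_const _).add (hlinear i)).sub (integrable_const _)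
  have hCstar : cvarLoss P ε (f xstar) βstar ≤ 0 := by
    rw [cvarLoss, ← hC]
    exact (hmin (Set.mk_mem_prod hx (Set.mem_univ β))).trans hCx
  rw [hfeas, ← measureReal_def]
  exact one_sub_le_measureReal_nonpos_of_cvarLoss_nonpos hg hε.1 hCstar

/-- **The weak variant ALSO-X#-underline is better than the CVaR approximation.**
If at level `t` the CVaR approximation is feasible (there are `x ∈ F t` and `β ≤ 0` with
`C x β ≤ 0`), then every minimizer of the lower-level ALSO-X#-underline problem (with `β`
unconstrained) has a feasible `x`-component. -/
theorem weak_alsoxSharp_better_than_cvar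
    (n m I : ℕ) (hn : 1 ≤ n) (hm : 1 ≤ m) (hI : 1 ≤ I)
    (c : Fin n → ℝ) (X : Set (Fin n → ℝ))
    (ε : ℝ) (hε : ε ∈ Set.Ioo (0 : ℝ) 1)
    (θ : ℝ) (hθ : 0 ≤ θ)
    -- `N` is a norm on ℝᵐ (playing the role of the dual norm)
    (N : (Fin m → ℝ) → ℝ)
    (hN_tri : ∀ v w, N (v + w) ≤ N v + N w)
    (hN_smul : ∀ (r : ℝ) (v), N (r • v) = |r| * N v)
    (hN_def : ∀ v, N v = 0 → v = 0)
    -- affine maps `a i : ℝⁿ → ℝᵐ`, `b i : ℝⁿ → ℝ`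
    (a : Fin I → ((Fin n → ℝ) →ᵃ[ℝ] (Fin m → ℝ)))
    (b : Fin I → ((Fin n → ℝ) →ᵃ[ℝ] ℝ))
    -- reference distribution
    (P : Measure (Fin m → ℝ)) [IsProbabilityMeasure P]
    (hint : ∀ x : Fin n → ℝ,
      Integrable (fun ζ => ⨆ i : Fin I, |∑ k, a i x k * ζ k|) P)
    -- `f x ζ = max_i (θ N(aᵢ(x)) + aᵢ(x)ᵀζ - bᵢ(x))`
    (f : (Fin n → ℝ) → (Fin m → ℝ) → ℝ)
    (hf : ∀ x ζ, f x ζ = ⨆ i : Fin I, (θ * N (a i x) + ∑ k, a i x k * ζ k - b i x))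
    -- feasibility for the distributionally robust chance constraint
    (feasible : (Fin n → ℝ) → Prop)
    (hfeas : ∀ x, feasible x ↔ 1 - ε ≤ (P {ζ | f x ζ ≤ 0}).toReal)
    -- `F t = {x ∈ X : cᵀx ≤ t}`
    (F : ℝ → Set (Fin n → ℝ))
    (hF : ∀ t, F t = {x ∈ X | ∑ k, c k * x k ≤ t})
    -- hinge loss (lower-level ALSO-X objective)
    (H : (Fin n → ℝ) → ℝ)
    (hH : ∀ x, H x = ∫ ζ, max (f x ζ) 0 ∂P)
    -- CVaR loss (lower-level CVaR / ALSO-X#-underline objective)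
    (C : (Fin n → ℝ) → ℝ → ℝ)
    (hC : ∀ x β, C x β = ε * β + ∫ ζ, max (f x ζ - β) 0 ∂P) :
    ∀ t : ℝ,
      (∃ x ∈ F t, ∃ β ≤ (0 : ℝ), C x β ≤ 0) →
      ∀ (xstar : Fin n → ℝ) (βstar : ℝ), (xstar, βstar) ∈ F t ×ˢ (Set.univ : Set ℝ) →
        IsMinOn (fun q : (Fin n → ℝ) × ℝ => C q.1 q.2) (F t ×ˢ (Set.univ : Set ℝ)) (xstar, βstar) →
        feasible xstar :=
  weak_alsoxSharp_better_than_cvar_general n m I ε hε θ N a b P hint f hf feasible hfeas F C hC
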